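/- arXiv:2508.18530 — 4 statements merged into one kernel-verified Lean document; each statement's English description precedes it below -/
import Mathlib

section
/- Let v_d : X → ℝ^m and r : X → ℝ≥0 be Lipschitz continuous with constants L_{v_d} and L_r respectively, where X ⊆ ℝ^n. Define v(x) as the projection of v_d(x) onto the closed ball of radius r(x) centered at the origin, i.e., v(x) = argmin_{‖v‖ ≤ r(x)} ‖v − v_d(x)‖². Then v is Lipschitz continuous on X with constant L_{v_d} + L_r. -/
open scoped RealInnerProductSpace

private lemma min_lip (s t c : ℝ) : |min s c - min t c| ≤ |s - t| := by
  rcases le_total s c with h1 | h1 <;> rcases le_total t c with h2 | h2 <;>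
    simp only [min_eq_left, min_eq_right, h1, h2] <;> rw [abs_le] <;>
    constructor <;> nlinarith [le_abs_self (s - t), neg_abs_le (s - t)]

private lemma proj_lip_radius {E : Type*} [NormedAddCommGroup E] [InnerProductSpace ℝ E]
    (s t : ℝ) (a : E) :
    ‖(min s ‖a‖ / ‖a‖) • a - (min t ‖a‖ / ‖a‖) • a‖ ≤ |s - t| := by
  rcases eq_or_ne a 0 with rfl | ha
  · simp [abs_nonneg]
  · have hna : (0:ℝ) < ‖a‖ := norm_pos_iff.mpr ha
    rw [← sub_smul, norm_smul, Real.norm_eq_abs, ← sub_div, abs_div, abs_of_pos hna,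
      div_mul_cancel₀ _ hna.ne']
    exact min_lip s t ‖a‖

private lemma proj_lip_point {E : Type*} [NormedAddCommGroup E] [InnerProductSpace ℝ E]
    (t : ℝ) (ht : 0 ≤ t) (a b : E) :
    ‖(min t ‖a‖ / ‖a‖) • a - (min t ‖b‖ / ‖b‖) • b‖ ≤ ‖a - b‖ := by
  rcases eq_or_ne a 0 with rfl | ha
  · rcases eq_or_ne b 0 with rfl | hb
    · simp
    · have hnb : (0:ℝ) < ‖b‖ := norm_pos_iff.mpr hb
      rw [smul_zero, zero_sub, norm_neg, norm_smul, Real.norm_eq_abs, abs_div,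
        abs_of_pos hnb, div_mul_cancel₀ _ hnb.ne', zero_sub, norm_neg]
      calc |min t ‖b‖| = min t ‖b‖ := abs_of_nonneg (le_min ht (norm_nonneg b))
        _ ≤ ‖b‖ := min_le_right _ _
  rcases eq_or_ne b 0 with rfl | hb
  · have hna : (0:ℝ) < ‖a‖ := norm_pos_iff.mpr ha
    rw [smul_zero, sub_zero, norm_smul, Real.norm_eq_abs, abs_div,
      abs_of_pos hna, div_mul_cancel₀ _ hna.ne', sub_zero]
    calc |min t ‖a‖| = min t ‖a‖ := abs_of_nonneg (le_min ht (norm_nonneg a))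
      _ ≤ ‖a‖ := min_le_right _ _
  · have hna : (0:ℝ) < ‖a‖ := norm_pos_iff.mpr ha
    have hnb : (0:ℝ) < ‖b‖ := norm_pos_iff.mpr hb
    set α := min t ‖a‖ with hα
    set β := min t ‖b‖ with hβ
    have hα0 : 0 ≤ α := le_min ht (norm_nonneg a)
    have hβ0 : 0 ≤ β := le_min ht (norm_nonneg b)
    have hαa : α ≤ ‖a‖ := min_le_right _ _
    have hβb : β ≤ ‖b‖ := min_le_right _ _
    have hαβ : |α - β| ≤ |‖a‖ - ‖b‖| := by
      calc |α - β| = |min ‖a‖ t - min ‖b‖ t| := by rw [hα, hβ, min_comm t, min_comm t]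
        _ ≤ |‖a‖ - ‖b‖| := min_lip _ _ _
    have hinner : ⟪a, b⟫ ≤ ‖a‖ * ‖b‖ := real_inner_le_norm a b
    have key : (0:ℝ) ≤ (‖a‖ - ‖b‖)^2 - (α - β)^2 := by
      nlinarith [abs_nonneg (α - β), sq_abs (α - β), sq_abs (‖a‖ - ‖b‖)]
    have hprod : α * β ≤ ‖a‖ * ‖b‖ := mul_le_mul hαa hβb hβ0 (norm_nonneg a)
    have hsq : ‖(α / ‖a‖) • a - (β / ‖b‖) • b‖ ^ 2 ≤ ‖a - b‖ ^ 2 := by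
      rw [norm_sub_sq_real, norm_sub_sq_real, real_inner_smul_left, real_inner_smul_right,
        norm_smul, norm_smul, Real.norm_eq_abs, Real.norm_eq_abs,
        abs_div, abs_div, abs_of_pos hna, abs_of_pos hnb,
        abs_of_nonneg hα0, abs_of_nonneg hβ0, div_mul_cancel₀ _ hna.ne',
        div_mul_cancel₀ _ hnb.ne']
      rw [← sub_nonneg]
      have hrw : (‖a‖^2 - 2*⟪a,b⟫ + ‖b‖^2) - (α^2 - 2*(α / ‖a‖ * (β / ‖b‖ * ⟪a,b⟫)) + β^2)
          = (‖a‖*‖b‖*(‖a‖^2 + ‖b‖^2 - α^2 - β^2) - 2*⟪a,b⟫*(‖a‖*‖b‖ - α*β)) / (‖a‖*‖b‖) := by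
        field_simp; ring
      rw [hrw]
      apply div_nonneg _ (mul_pos hna hnb).le
      nlinarith [mul_le_mul_of_nonneg_right hinner (sub_nonneg.2 hprod),
        mul_nonneg (mul_pos hna hnb).le key]
    have h1 : (0:ℝ) ≤ ‖a - b‖ := norm_nonneg _
    nlinarith [norm_nonneg ((α / ‖a‖) • a - (β / ‖b‖) • b), hsq]

/-- projection of a Lipschitz map onto balls of Lipschitz radius is
Lipschitz with constant `L_{v_d} + L_r`. -/
theorem lipschitz_proj_ball (n m : ℕ) (X : Set (EuclideanSpace ℝ (Fin n)))
    (vd : EuclideanSpace ℝ (Fin n) → EuclideanSpace ℝ (Fin m))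
    (r : EuclideanSpace ℝ (Fin n) → ℝ)
    (Lvd Lr : NNReal)
    (hvd : LipschitzOnWith Lvd vd X)
    (hrL : LipschitzOnWith Lr r X)
    (hr0 : ∀ x ∈ X, 0 ≤ r x) :
    LipschitzOnWith (Lvd + Lr)
      (fun x => (min (r x) ‖vd x‖ / ‖vd x‖) • vd x) X := by
  rw [lipschitzOnWith_iff_dist_le_mul]
  intro x hx y hy
  have hvd' := (lipschitzOnWith_iff_dist_le_mul.mp hvd) x hx y hy
  have hrL' := (lipschitzOnWith_iff_dist_le_mul.mp hrL) x hx y hy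
  rw [dist_eq_norm]
  calc ‖(min (r x) ‖vd x‖ / ‖vd x‖) • vd x - (min (r y) ‖vd y‖ / ‖vd y‖) • vd y‖
      ≤ ‖(min (r x) ‖vd x‖ / ‖vd x‖) • vd x - (min (r y) ‖vd x‖ / ‖vd x‖) • vd x‖ +
        ‖(min (r y) ‖vd x‖ / ‖vd x‖) • vd x - (min (r y) ‖vd y‖ / ‖vd y‖) • vd y‖ :=
        norm_sub_le_norm_sub_add_norm_sub _ _ _
    _ ≤ |r x - r y| + ‖vd x - vd y‖ :=
        add_le_add (proj_lip_radius _ _ _) (proj_lip_point _ (hr0 y hy) _ _)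
    _ ≤ Lr * dist x y + Lvd * dist x y := by
        rw [← Real.dist_eq, ← dist_eq_norm]; exact add_le_add hrL' hvd'
    _ = ↑(Lvd + Lr) * dist x y := by push_cast; ring
end

section
/- (Main Theorem, parts 1–3) Suppose a_i : X → ℝ^m, b_i : X → ℝ (i = 1,…,p) are Lipschitz with ‖a_i(x)‖ = 1 for all x, π_des : X → ℝ^m is Lipschitz, and π_f : X → ℝ^m is Lipschitz, bounded, and satisfies a_i(x)ᵀπ_f(x) ≤ b_i(x) for all i, x. Define r(x) = min_i (b_i(x) − a_i(x)ᵀπ_f(x)) and π_socp(x) = π_f(x) + Proj_{r(x)}(π_des(x) − π_f(x)), where Proj_r is projection onto the closed ball of radius r at the origin. Then: (1) π_socp(x) is the unique minimizer of ‖u − π_des(x)‖² over {u : ‖u − π_f(x)‖ ≤ r(x)}; (2) π_socp(x) ∈ K(x) = {u : a_i(x)ᵀu ≤ b_i(x) ∀i}; (3) π_socp is Lipschitz on X. -/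
/-!
With `v = π_des − π_f`, the vector `π_socp − π_f` is the metric projection of `v` onto the ball of
radius `r`, characterised by the variational inequality `⟪v − P, w − P⟫ ≤ 0` for all `w` in the
ball. This gives strict optimality of `π_socp` and nonexpansiveness of the projection in `v`;
changing the radius from `r` to `r'` moves the projection by at most `|r − r'|`. Feasibility is
Cauchy–Schwarz with `‖a_i‖ = 1` and `r ≤ b_i − ⟪a_i, π_f⟫`. Finally `r` is a finite minimum of the
slacks `b_i − ⟪a_i, π_f⟫`, each Lipschitz because `a_i` and `π_f` are Lipschitz and bounded, so `r`,
and with it `π_socp`, is Lipschitz.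
-/

open scoped RealInnerProductSpace

/-- Projection onto the closed origin-centered ball of radius `r`
(equals `0` when `u = 0`). -/
noncomputable def projBall (m : ℕ) (r : ℝ) (u : EuclideanSpace ℝ (Fin m)) :
    EuclideanSpace ℝ (Fin m) :=
  (min r ‖u‖ / ‖u‖) • u

/-- The tightened radius `r(x) = min_i (b_i(x) − a_i(x)ᵀπ_f(x))`. -/
noncomputable def rSocp (n m p : ℕ)
    (a : Fin p → EuclideanSpace ℝ (Fin n) → EuclideanSpace ℝ (Fin m))
    (b : Fin p → EuclideanSpace ℝ (Fin n) → ℝ)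
    (πf : EuclideanSpace ℝ (Fin n) → EuclideanSpace ℝ (Fin m))
    (x : EuclideanSpace ℝ (Fin n)) : ℝ :=
  ⨅ i, (b i x - ⟪a i x, πf x⟫)

/-- The SOCP solution `π_socp(x) = π_f(x) + Proj_{r(x)}(π_des(x) − π_f(x))`. -/
noncomputable def piSocp (n m p : ℕ)
    (a : Fin p → EuclideanSpace ℝ (Fin n) → EuclideanSpace ℝ (Fin m))
    (b : Fin p → EuclideanSpace ℝ (Fin n) → ℝ)
    (πdes πf : EuclideanSpace ℝ (Fin n) → EuclideanSpace ℝ (Fin m))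
    (x : EuclideanSpace ℝ (Fin n)) : EuclideanSpace ℝ (Fin m) :=
  πf x + projBall m (rSocp n m p a b πf x) (πdes x - πf x)

section InnerProductSpace

variable {F : Type*} [NormedAddCommGroup F] [InnerProductSpace ℝ F]

theorem norm_sub_lt_of_inner_sub_nonpos {u P w : F} (h : ⟪u - P, w - P⟫ ≤ 0) (hne : w ≠ P) :
    ‖P - u‖ < ‖w - u‖ := by
  have hpos : 0 < ‖w - P‖ := norm_pos_iff.mpr (sub_ne_zero.mpr hne)
  have hexpand : ‖w - u‖ ^ 2 = ‖w - P‖ ^ 2 + 2 * ⟪w - P, P - u⟫ + ‖P - u‖ ^ 2 := by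
    rw [← norm_add_sq_real, sub_add_sub_cancel]
  have hinner : ⟪w - P, P - u⟫ = -⟪u - P, w - P⟫ := by
    rw [← neg_sub u P, inner_neg_right, real_inner_comm]
  have hsq : ‖P - u‖ ^ 2 < ‖w - u‖ ^ 2 := by nlinarith
  exact lt_of_pow_lt_pow_left₀ 2 (norm_nonneg _) hsq

theorem norm_sub_le_of_inner_sub_nonpos {u u' P Q : F} (h : ⟪u - P, Q - P⟫ ≤ 0)
    (h' : ⟪u' - Q, P - Q⟫ ≤ 0) : ‖P - Q‖ ≤ ‖u - u'‖ := by
  have hsq : ‖P - Q‖ ^ 2 ≤ ⟪u - u', P - Q⟫ := by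
    have e : ⟪u - u', P - Q⟫ - ‖P - Q‖ ^ 2 = -⟪u - P, Q - P⟫ - ⟪u' - Q, P - Q⟫ := by
      rw [← real_inner_self_eq_norm_sq]
      simp only [inner_sub_left, inner_sub_right, real_inner_comm P Q]
      ring
    linarith
  have hcs : ⟪u - u', P - Q⟫ ≤ ‖u - u'‖ * ‖P - Q‖ := real_inner_le_norm _ _
  rcases (norm_nonneg (P - Q)).eq_or_lt with h0 | h0
  · rw [← h0]; exact norm_nonneg _
  · nlinarith

theorem LipschitzOnWith.inner {α : Type*} [PseudoMetricSpace α] {s : Set α} {f g : α → F}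
    {Kf Kg Cf Cg : NNReal} (hf : LipschitzOnWith Kf f s) (hg : LipschitzOnWith Kg g s)
    (hCf : ∀ x ∈ s, ‖f x‖ ≤ Cf) (hCg : ∀ x ∈ s, ‖g x‖ ≤ Cg) :
    LipschitzOnWith (Kf * Cg + Cf * Kg) (fun x => ⟪f x, g x⟫) s := by
  refine LipschitzOnWith.of_dist_le_mul fun x hx y hy => ?_
  have hsplit : ⟪f x, g x⟫ - ⟪f y, g y⟫ = ⟪f x - f y, g x⟫ + ⟪f y, g x - g y⟫ := by
    rw [inner_sub_left, inner_sub_right]; ring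
  have hdf : ‖f x - f y‖ ≤ Kf * dist x y := by
    simpa only [dist_eq_norm] using hf.dist_le_mul x hx y hy
  have hdg : ‖g x - g y‖ ≤ Kg * dist x y := by
    simpa only [dist_eq_norm] using hg.dist_le_mul x hx y hy
  rw [Real.dist_eq, hsplit]
  calc |⟪f x - f y, g x⟫ + ⟪f y, g x - g y⟫|
      ≤ ‖f x - f y‖ * ‖g x‖ + ‖f y‖ * ‖g x - g y‖ :=
        (abs_add_le _ _).trans
          (add_le_add (abs_real_inner_le_norm _ _) (abs_real_inner_le_norm _ _))
    _ ≤ (Kf * dist x y) * Cg + Cf * (Kg * dist x y) := by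
        gcongr
        exacts [hCg x hx, hCf y hy]
    _ = ↑(Kf * Cg + Cf * Kg) * dist x y := by push_cast; ring

end InnerProductSpace

theorem LipschitzOnWith.iInf {α ι : Type*} [PseudoMetricSpace α] [Finite ι] {s : Set α}
    {f : ι → α → ℝ} {K : NNReal} (hf : ∀ i, LipschitzOnWith K (f i) s) :
    LipschitzOnWith K (fun x => ⨅ i, f i x) s := by
  refine LipschitzOnWith.of_le_add_mul K fun x hx y hy => ?_
  rcases isEmpty_or_nonempty ι with hι | hι
  · simp only [Real.iInf_of_isEmpty, zero_add]; positivity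
  rw [← sub_le_iff_le_add]
  refine le_ciInf fun i => ?_
  have hle : ⨅ j, f j x ≤ f i x := ciInf_le (Set.finite_range _).bddBelow i
  linarith [(hf i).le_add_mul hx hy]

section projBall

variable {m : ℕ}

theorem projBall_of_norm_le {r : ℝ} {u : EuclideanSpace ℝ (Fin m)} (h : ‖u‖ ≤ r) :
    projBall m r u = u := by
  rcases eq_or_ne u 0 with rfl | hu
  · simp [projBall]
  · rw [projBall, min_eq_right h, div_self (norm_ne_zero_iff.mpr hu), one_smul]

theorem projBall_of_lt_norm {r : ℝ} {u : EuclideanSpace ℝ (Fin m)} (h : r < ‖u‖) :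
    projBall m r u = (r / ‖u‖) • u := by
  rw [projBall, min_eq_left h.le]

theorem norm_projBall_le {r : ℝ} (hr : 0 ≤ r) (u : EuclideanSpace ℝ (Fin m)) :
    ‖projBall m r u‖ ≤ r := by
  rcases le_or_gt ‖u‖ r with h | h
  · rwa [projBall_of_norm_le h]
  · have hu : 0 < ‖u‖ := hr.trans_lt h
    rw [projBall_of_lt_norm h, norm_smul, Real.norm_of_nonneg (by positivity),
      div_mul_cancel₀ _ hu.ne']

theorem inner_sub_projBall_nonpos {r : ℝ} (u : EuclideanSpace ℝ (Fin m))
    {w : EuclideanSpace ℝ (Fin m)} (hw : ‖w‖ ≤ r) :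
    ⟪u - projBall m r u, w - projBall m r u⟫ ≤ 0 := by
  rcases le_or_gt ‖u‖ r with h | h
  · simp [projBall_of_norm_le h]
  · have hu : 0 < ‖u‖ := (norm_nonneg w).trans_lt (hw.trans_lt h)
    set c := r / ‖u‖
    have hc : c * ‖u‖ = r := div_mul_cancel₀ _ hu.ne'
    have hc1 : 0 ≤ 1 - c := by rw [sub_nonneg, div_le_one hu]; exact h.le
    have hcs : ⟪u, w⟫ ≤ ‖u‖ * r := (real_inner_le_norm u w).trans (by gcongr)
    have hsub : u - c • u = (1 - c) • u := by rw [sub_smul, one_smul]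
    rw [projBall_of_lt_norm h, hsub, real_inner_smul_left, inner_sub_right,
      real_inner_smul_right, real_inner_self_eq_norm_sq]
    refine mul_nonpos_of_nonneg_of_nonpos hc1 ?_
    nlinarith

theorem norm_projBall_sub_projBall_le {r : ℝ} (hr : 0 ≤ r) (u u' : EuclideanSpace ℝ (Fin m)) :
    ‖projBall m r u - projBall m r u'‖ ≤ ‖u - u'‖ :=
  norm_sub_le_of_inner_sub_nonpos (inner_sub_projBall_nonpos u (norm_projBall_le hr u'))
    (inner_sub_projBall_nonpos u' (norm_projBall_le hr u))

theorem norm_projBall_sub_projBall_radius_le (r r' : ℝ) (u : EuclideanSpace ℝ (Fin m)) :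
    ‖projBall m r u - projBall m r' u‖ ≤ |r - r'| := by
  rcases eq_or_ne u 0 with rfl | hu
  · simp [projBall]
  have hu : 0 < ‖u‖ := norm_pos_iff.mpr hu
  rw [projBall, projBall, ← sub_smul, ← sub_div, norm_smul, Real.norm_eq_abs, abs_div,
    abs_of_pos hu, div_mul_cancel₀ _ hu.ne']
  simpa using abs_min_sub_min_le_max r ‖u‖ r' ‖u‖

theorem LipschitzOnWith.projBall {α : Type*} [PseudoMetricSpace α] {s : Set α}
    {r : α → ℝ} {v : α → EuclideanSpace ℝ (Fin m)} {Kr Kv : NNReal}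
    (hr : LipschitzOnWith Kr r s) (hv : LipschitzOnWith Kv v s) (hr0 : ∀ x ∈ s, 0 ≤ r x) :
    LipschitzOnWith (Kr + Kv) (fun x => _root_.projBall m (r x) (v x)) s := by
  refine LipschitzOnWith.of_dist_le_mul fun x hx y hy => ?_
  have hdr : |r x - r y| ≤ Kr * dist x y := by
    simpa only [Real.dist_eq] using hr.dist_le_mul x hx y hy
  have hdv : ‖v x - v y‖ ≤ Kv * dist x y := by
    simpa only [dist_eq_norm] using hv.dist_le_mul x hx y hy
  calc dist (_root_.projBall m (r x) (v x)) (_root_.projBall m (r y) (v y))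
      ≤ dist (_root_.projBall m (r x) (v x)) (_root_.projBall m (r y) (v x))
        + dist (_root_.projBall m (r y) (v x)) (_root_.projBall m (r y) (v y)) :=
        dist_triangle _ _ _
    _ ≤ |r x - r y| + ‖v x - v y‖ := by
        rw [dist_eq_norm, dist_eq_norm]
        exact add_le_add (norm_projBall_sub_projBall_radius_le _ _ _)
          (norm_projBall_sub_projBall_le (hr0 y hy) _ _)
    _ ≤ ↑(Kr + Kv) * dist x y := by push_cast; linarith

end projBall

section piSocp

variable {n m p : ℕ} {a : Fin p → EuclideanSpace ℝ (Fin n) → EuclideanSpace ℝ (Fin m)}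
  {b : Fin p → EuclideanSpace ℝ (Fin n) → ℝ}
  {πdes πf : EuclideanSpace ℝ (Fin n) → EuclideanSpace ℝ (Fin m)}
  {x : EuclideanSpace ℝ (Fin n)}

theorem rSocp_nonneg (hfeas : ∀ i, ⟪a i x, πf x⟫ ≤ b i x) : 0 ≤ rSocp n m p a b πf x :=
  Real.iInf_nonneg fun i => sub_nonneg.mpr (hfeas i)

theorem rSocp_le (i : Fin p) : rSocp n m p a b πf x ≤ b i x - ⟪a i x, πf x⟫ :=
  ciInf_le (Set.finite_range _).bddBelow i

theorem piSocp_sub_self :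
    piSocp n m p a b πdes πf x - πf x = projBall m (rSocp n m p a b πf x) (πdes x - πf x) :=
  add_sub_cancel_left _ _

theorem norm_piSocp_sub_lt {u : EuclideanSpace ℝ (Fin m)} (hu : ‖u - πf x‖ ≤ rSocp n m p a b πf x)
    (hne : u ≠ piSocp n m p a b πdes πf x) :
    ‖piSocp n m p a b πdes πf x - πdes x‖ < ‖u - πdes x‖ := by
  refine norm_sub_lt_of_inner_sub_nonpos ?_ hne
  rw [piSocp, sub_add_eq_sub_sub, sub_add_eq_sub_sub]
  exact inner_sub_projBall_nonpos _ hu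

theorem inner_piSocp_le (i : Fin p) (ha : ‖a i x‖ = 1) (hfeas : ∀ i, ⟪a i x, πf x⟫ ≤ b i x) :
    ⟪a i x, piSocp n m p a b πdes πf x⟫ ≤ b i x := by
  have hproj : ⟪a i x, projBall m (rSocp n m p a b πf x) (πdes x - πf x)⟫
      ≤ rSocp n m p a b πf x := by
    refine (real_inner_le_norm _ _).trans ?_
    rw [ha, one_mul]
    exact norm_projBall_le (rSocp_nonneg hfeas) _
  rw [piSocp, inner_add_right]
  linarith [rSocp_le (a := a) (b := b) (πf := πf) (x := x) i]

theorem lipschitzOnWith_rSocp {X : Set (EuclideanSpace ℝ (Fin n))} {La Lb : Fin p → NNReal}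
    {Lf U : NNReal} (ha : ∀ i, ∀ x ∈ X, ‖a i x‖ = 1) (haL : ∀ i, LipschitzOnWith (La i) (a i) X)
    (hbL : ∀ i, LipschitzOnWith (Lb i) (b i) X) (hfL : LipschitzOnWith Lf πf X)
    (hU : ∀ x ∈ X, ‖πf x‖ ≤ (U : ℝ)) :
    ∃ K, LipschitzOnWith K (rSocp n m p a b πf) X := by
  set K : Fin p → NNReal := fun i => Lb i + (La i * U + 1 * Lf)
  have hslack (i : Fin p) : LipschitzOnWith (K i) (fun x => b i x - ⟪a i x, πf x⟫) X :=
    (hbL i).sub ((haL i).inner (Cf := 1) hfL (fun x hx => by simp [ha i x hx]) hU)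
  exact ⟨_, LipschitzOnWith.iInf fun i =>
    (hslack i).weaken (Finset.le_sup (f := K) (Finset.mem_univ i))⟩

end piSocp

theorem main_theorem_general (n m p : ℕ)
    (X : Set (EuclideanSpace ℝ (Fin n)))
    (a : Fin p → EuclideanSpace ℝ (Fin n) → EuclideanSpace ℝ (Fin m))
    (b : Fin p → EuclideanSpace ℝ (Fin n) → ℝ)
    (πdes πf : EuclideanSpace ℝ (Fin n) → EuclideanSpace ℝ (Fin m))
    (La Lb : Fin p → NNReal) (Ldes Lf U : NNReal)
    (ha : ∀ i, ∀ x ∈ X, ‖a i x‖ = 1)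
    (haL : ∀ i, LipschitzOnWith (La i) (a i) X)
    (hbL : ∀ i, LipschitzOnWith (Lb i) (b i) X)
    (hdesL : LipschitzOnWith Ldes πdes X)
    (hfL : LipschitzOnWith Lf πf X)
    (hU : ∀ x ∈ X, ‖πf x‖ ≤ (U : ℝ))
    (hfeas : ∀ i, ∀ x ∈ X, ⟪a i x, πf x⟫ ≤ b i x) :
    (∀ x ∈ X,
      ‖piSocp n m p a b πdes πf x - πf x‖ ≤ rSocp n m p a b πf x ∧
      ∀ u : EuclideanSpace ℝ (Fin m), ‖u - πf x‖ ≤ rSocp n m p a b πf x →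
        u ≠ piSocp n m p a b πdes πf x →
        ‖piSocp n m p a b πdes πf x - πdes x‖ < ‖u - πdes x‖) ∧
    (∀ x ∈ X, ∀ i, ⟪a i x, piSocp n m p a b πdes πf x⟫ ≤ b i x) ∧
    (∃ L : NNReal, LipschitzOnWith L (piSocp n m p a b πdes πf) X) := by
  have hr0 (x) (hx : x ∈ X) : 0 ≤ rSocp n m p a b πf x := rSocp_nonneg fun i => hfeas i x hx
  refine ⟨fun x hx => ⟨?_, fun u hu hne => norm_piSocp_sub_lt hu hne⟩,
    fun x hx i => inner_piSocp_le i (ha i x hx) fun j => hfeas j x hx, ?_⟩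
  · rw [piSocp_sub_self]
    exact norm_projBall_le (hr0 x hx) _
  · obtain ⟨K, hK⟩ := lipschitzOnWith_rSocp ha haL hbL hfL hU
    exact ⟨_, hfL.add (hK.projBall (hdesL.sub hfL) hr0)⟩

/-- Main Theorem, parts 1–3. -/
theorem main_theorem (n m p : ℕ) (hp : 0 < p)
    (X : Set (EuclideanSpace ℝ (Fin n)))
    (a : Fin p → EuclideanSpace ℝ (Fin n) → EuclideanSpace ℝ (Fin m))
    (b : Fin p → EuclideanSpace ℝ (Fin n) → ℝ)
    (πdes πf : EuclideanSpace ℝ (Fin n) → EuclideanSpace ℝ (Fin m))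
    (La Lb : Fin p → NNReal) (Ldes Lf U : NNReal)
    (ha : ∀ i, ∀ x ∈ X, ‖a i x‖ = 1)
    (haL : ∀ i, LipschitzOnWith (La i) (a i) X)
    (hbL : ∀ i, LipschitzOnWith (Lb i) (b i) X)
    (hdesL : LipschitzOnWith Ldes πdes X)
    (hfL : LipschitzOnWith Lf πf X)
    (hU : ∀ x ∈ X, ‖πf x‖ ≤ (U : ℝ))
    (hfeas : ∀ i, ∀ x ∈ X, ⟪a i x, πf x⟫ ≤ b i x) :
    (∀ x ∈ X,
      ‖piSocp n m p a b πdes πf x - πf x‖ ≤ rSocp n m p a b πf x ∧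
      ∀ u : EuclideanSpace ℝ (Fin m), ‖u - πf x‖ ≤ rSocp n m p a b πf x →
        u ≠ piSocp n m p a b πdes πf x →
        ‖piSocp n m p a b πdes πf x - πdes x‖ < ‖u - πdes x‖) ∧
    (∀ x ∈ X, ∀ i, ⟪a i x, piSocp n m p a b πdes πf x⟫ ≤ b i x) ∧
    (∃ L : NNReal, LipschitzOnWith L (piSocp n m p a b πdes πf) X) :=
  main_theorem_general n m p X a b πdes πf La Lb Ldes Lf U ha haL hbL hdesL hfL hU hfeas
end

section
/- With the assumptions of the main theorem (Lipschitz constants L_{a_i}, L_{b_i}, L_{π_des}, L_{π_f}, bound Ū on π_f, unit-norm rows a_i), the solution π_socp(x) = π_f(x) + min(r(x), ‖v_des(x)‖)·v_des(x)/‖v_des(x)‖ (with v_des = π_des − π_f, r(x) = min_i(b_i(x) − a_i(x)ᵀπ_f(x))) is Lipschitz with constant L_{π_des} + 2L_{π_f} + max_i(L_{b_i} + L_{π_f} + L_{a_i}Ū). -/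
open scoped RealInnerProductSpace

lemma abs_min_sub_min (r s c : ℝ) : |min r c - min s c| ≤ |r - s| := by
  rcases le_total r c with h|h <;> rcases le_total s c with h'|h' <;>
    simp only [min_eq_left, min_eq_right, h, h'] <;>
    rw [abs_sub_le_iff] <;> constructor <;> cases abs_cases (r - s) <;> linarith [abs_nonneg (r-s)]

lemma projBall_radius (m : ℕ) (r s : ℝ) (u : EuclideanSpace ℝ (Fin m)) :
    ‖projBall m r u - projBall m s u‖ ≤ |r - s| := by
  unfold projBall
  rw [← sub_smul, div_sub_div_same, norm_smul, Real.norm_eq_abs]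
  rcases eq_or_ne ‖u‖ 0 with h | h
  · rw [h]; simp [abs_nonneg]
  · rw [abs_div, abs_of_nonneg (norm_nonneg u), div_mul_cancel₀ _ h]
    exact abs_min_sub_min r s ‖u‖

lemma projBall_nonexp (m : ℕ) (s : ℝ) (hs : 0 ≤ s) (u w : EuclideanSpace ℝ (Fin m)) :
    ‖projBall m s u - projBall m s w‖ ≤ ‖u - w‖ := by
  unfold projBall
  set a := ‖u‖ with ha
  set b := ‖w‖ with hb
  set c := min s a with hc
  set d := min s b with hd
  have ha0 : 0 ≤ a := norm_nonneg u
  have hb0 : 0 ≤ b := norm_nonneg w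
  have hc0 : 0 ≤ c := le_min hs ha0
  have hd0 : 0 ≤ d := le_min hs hb0
  have hca : c ≤ a := min_le_right _ _
  have hdb : d ≤ b := min_le_right _ _
  rcases eq_or_ne a 0 with h | h
  · have hu : u = (0 : EuclideanSpace ℝ (Fin m)) := norm_eq_zero.mp h
    rcases eq_or_ne b 0 with h' | h'
    · have hw : w = (0 : EuclideanSpace ℝ (Fin m)) := norm_eq_zero.mp h'
      simp [hu, hw]
    · rw [hu]
      simp only [zero_sub, smul_zero, norm_neg, norm_smul, Real.norm_eq_abs]
      rw [abs_div, abs_of_nonneg hd0, abs_of_nonneg hb0, ← hb, div_mul_cancel₀ _ h']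
      calc d ≤ b := hdb
        _ = ‖w‖ := hb
  · rcases eq_or_ne b 0 with h' | h'
    · have hw : w = (0 : EuclideanSpace ℝ (Fin m)) := norm_eq_zero.mp h'
      rw [hw, sub_zero]
      simp only [smul_zero, sub_zero, norm_smul, Real.norm_eq_abs]
      rw [abs_div, abs_of_nonneg hc0, abs_of_nonneg ha0, ← ha, div_mul_cancel₀ _ h]
      exact hca
    · -- both nonzero
      have hap : 0 < a := lt_of_le_of_ne ha0 (Ne.symm h)
      have hbp : 0 < b := lt_of_le_of_ne hb0 (Ne.symm h')
      have key : ‖(c / a) • u - (d / b) • w‖ ^ 2 ≤ ‖u - w‖ ^ 2 := by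
        rw [norm_sub_sq_real, norm_sub_sq_real, norm_smul, norm_smul,
          real_inner_smul_left, real_inner_smul_right]
        simp only [Real.norm_eq_abs]
        rw [abs_div, abs_of_nonneg hc0, abs_of_nonneg ha0, abs_div, abs_of_nonneg hd0,
          abs_of_nonneg hb0, ← ha, ← hb]
        rw [div_mul_cancel₀ _ h, div_mul_cancel₀ _ h']
        have ht : ⟪u, w⟫ ≤ a * b := real_inner_le_norm u w
        have hsq : (c - d) ^ 2 ≤ (a - b) ^ 2 := by
          have h1 : |c - d| ≤ |a - b| := by
            have := abs_min_sub_min a b s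
            simpa [hc, hd, min_comm] using this
          calc (c - d) ^ 2 = |c - d| ^ 2 := (sq_abs _).symm
            _ ≤ |a - b| ^ 2 := pow_le_pow_left₀ (abs_nonneg _) h1 2
            _ = (a - b) ^ 2 := sq_abs _
        have hl1 : c / a * (d / b) ≤ 1 := by
          rw [div_mul_div_comm, div_le_one (by positivity)]
          exact mul_le_mul hca hdb hd0 ha0
        have heq : c / a * (d / b) * (a * b) = c * d := by
          field_simp
        have hprod : 0 ≤ (1 - c / a * (d / b)) * (a * b - ⟪u, w⟫) :=
          mul_nonneg (by linarith) (by linarith)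
        nlinarith [hprod, hsq, heq]
      exact (pow_le_pow_iff_left₀ (norm_nonneg _) (norm_nonneg _) two_ne_zero).mp key

/-- the SOCP solution is Lipschitz with the explicit constant
`L_{π_des} + 2L_{π_f} + max_i (L_{b_i} + L_{π_f} + L_{a_i}·Ū)`. -/
theorem socp_explicit_lipschitz_constant (n m p : ℕ) (hp : 0 < p)
    (X : Set (EuclideanSpace ℝ (Fin n)))
    (a : Fin p → EuclideanSpace ℝ (Fin n) → EuclideanSpace ℝ (Fin m))
    (b : Fin p → EuclideanSpace ℝ (Fin n) → ℝ)
    (πdes πf : EuclideanSpace ℝ (Fin n) → EuclideanSpace ℝ (Fin m))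
    (La Lb : Fin p → NNReal) (Ldes Lf U : NNReal)
    (ha : ∀ i, ∀ x ∈ X, ‖a i x‖ = 1)
    (haL : ∀ i, LipschitzOnWith (La i) (a i) X)
    (hbL : ∀ i, LipschitzOnWith (Lb i) (b i) X)
    (hdesL : LipschitzOnWith Ldes πdes X)
    (hfL : LipschitzOnWith Lf πf X)
    (hU : ∀ x ∈ X, ‖πf x‖ ≤ (U : ℝ))
    (hfeas : ∀ i, ∀ x ∈ X, ⟪a i x, πf x⟫ ≤ b i x) :
    LipschitzOnWith (Ldes + 2 * Lf + ⨆ i, (Lb i + Lf + La i * U))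
      (fun x => πf x +
        projBall m (⨅ i, (b i x - ⟪a i x, πf x⟫)) (πdes x - πf x)) X := by
  haveI : Nonempty (Fin p) := ⟨⟨0, hp⟩⟩
  rw [lipschitzOnWith_iff_dist_le_mul]
  intro x hx y hy
  set D := dist x y with hD
  have hD0 : 0 ≤ D := dist_nonneg
  set S : ℝ := ((⨆ i, (Lb i + Lf + La i * U) : NNReal) : ℝ) with hS
  set rx := ⨅ i, (b i x - ⟪a i x, πf x⟫) with hrx
  set ry := ⨅ i, (b i y - ⟪a i y, πf y⟫) with hry
  have hrx0 : 0 ≤ rx := le_ciInf fun i => sub_nonneg.2 (hfeas i x hx)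
  have hry0 : 0 ≤ ry := le_ciInf fun i => sub_nonneg.2 (hfeas i y hy)
  have hf' : ‖πf x - πf y‖ ≤ (Lf : ℝ) * D := by
    have := lipschitzOnWith_iff_dist_le_mul.mp hfL x hx y hy
    rwa [dist_eq_norm] at this
  have hdes' : ‖πdes x - πdes y‖ ≤ (Ldes : ℝ) * D := by
    have := lipschitzOnWith_iff_dist_le_mul.mp hdesL x hx y hy
    rwa [dist_eq_norm] at this
  -- per-constraint bound
  have hterm : ∀ i, |(b i x - ⟪a i x, πf x⟫) - (b i y - ⟪a i y, πf y⟫)| ≤ S * D := by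
    intro i
    have hb' : |b i x - b i y| ≤ (Lb i : ℝ) * D := by
      have := lipschitzOnWith_iff_dist_le_mul.mp (hbL i) x hx y hy
      rwa [Real.dist_eq] at this
    have ha' : ‖a i x - a i y‖ ≤ (La i : ℝ) * D := by
      have := lipschitzOnWith_iff_dist_le_mul.mp (haL i) x hx y hy
      rwa [dist_eq_norm] at this
    have hsplit : ⟪a i x, πf x⟫ - ⟪a i y, πf y⟫
        = ⟪a i x - a i y, πf x⟫ + ⟪a i y, πf x - πf y⟫ := by
      rw [inner_sub_left, inner_sub_right]; ring
    have h1 : |⟪a i x - a i y, πf x⟫| ≤ (La i : ℝ) * D * U := by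
      calc |⟪a i x - a i y, πf x⟫| ≤ ‖a i x - a i y‖ * ‖πf x‖ := abs_real_inner_le_norm _ _
        _ ≤ ((La i : ℝ) * D) * (U : ℝ) :=
            mul_le_mul ha' (hU x hx) (norm_nonneg _) (by positivity)
    have h2 : |⟪a i y, πf x - πf y⟫| ≤ (Lf : ℝ) * D := by
      calc |⟪a i y, πf x - πf y⟫| ≤ ‖a i y‖ * ‖πf x - πf y‖ := abs_real_inner_le_norm _ _
        _ = ‖πf x - πf y‖ := by rw [ha i y hy, one_mul]
        _ ≤ (Lf : ℝ) * D := hf'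
    have hSi : ((Lb i + Lf + La i * U : NNReal) : ℝ) ≤ S := by
      rw [hS]
      exact_mod_cast le_ciSup (Set.Finite.bddAbove (Set.finite_range (fun i => Lb i + Lf + La i * U))) i
    have hle : |(b i x - ⟪a i x, πf x⟫) - (b i y - ⟪a i y, πf y⟫)|
        ≤ ((Lb i : ℝ) + Lf + La i * U) * D := by
      have habs : |(b i x - ⟪a i x, πf x⟫) - (b i y - ⟪a i y, πf y⟫)|
          ≤ |b i x - b i y| + |⟪a i x, πf x⟫ - ⟪a i y, πf y⟫| := by
        have : (b i x - ⟪a i x, πf x⟫) - (b i y - ⟪a i y, πf y⟫)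
            = (b i x - b i y) - (⟪a i x, πf x⟫ - ⟪a i y, πf y⟫) := by ring
        rw [this]
        exact abs_sub _ _
      have habs2 : |⟪a i x, πf x⟫ - ⟪a i y, πf y⟫|
          ≤ (La i : ℝ) * D * U + (Lf : ℝ) * D := by
        rw [hsplit]
        exact (abs_add_le _ _).trans (add_le_add h1 h2)
      calc |(b i x - ⟪a i x, πf x⟫) - (b i y - ⟪a i y, πf y⟫)|
          ≤ |b i x - b i y| + |⟪a i x, πf x⟫ - ⟪a i y, πf y⟫| := habs
        _ ≤ (Lb i : ℝ) * D + ((La i : ℝ) * D * U + (Lf : ℝ) * D) := add_le_add hb' habs2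
        _ = ((Lb i : ℝ) + Lf + La i * U) * D := by ring
    calc |(b i x - ⟪a i x, πf x⟫) - (b i y - ⟪a i y, πf y⟫)|
        ≤ ((Lb i : ℝ) + Lf + La i * U) * D := hle
      _ = ((Lb i + Lf + La i * U : NNReal) : ℝ) * D := by push_cast; ring
      _ ≤ S * D := mul_le_mul_of_nonneg_right hSi hD0
  -- infimum difference
  have hrdiff : |rx - ry| ≤ S * D := by
    rw [abs_le]
    constructor
    · rw [neg_le, neg_sub]
      have : ry - S * D ≤ rx := by
        rw [hrx]
        apply le_ciInf
        intro i
        have h1 : ry ≤ b i y - ⟪a i y, πf y⟫ :=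
          ciInf_le (Set.Finite.bddBelow (Set.finite_range _)) i
        have h2 := abs_le.mp (hterm i)
        linarith [h2.1]
      linarith
    · have : rx - S * D ≤ ry := by
        rw [hry]
        apply le_ciInf
        intro i
        have h1 : rx ≤ b i x - ⟪a i x, πf x⟫ :=
          ciInf_le (Set.Finite.bddBelow (Set.finite_range _)) i
        have h2 := abs_le.mp (hterm i)
        linarith [h2.2]
      linarith
  -- desired direction difference
  have hv : ‖(πdes x - πf x) - (πdes y - πf y)‖ ≤ ((Ldes : ℝ) + Lf) * D := by
    have : (πdes x - πf x) - (πdes y - πf y) = (πdes x - πdes y) - (πf x - πf y) := by abel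
    rw [this]
    calc ‖(πdes x - πdes y) - (πf x - πf y)‖ ≤ ‖πdes x - πdes y‖ + ‖πf x - πf y‖ :=
          norm_sub_le _ _
      _ ≤ (Ldes : ℝ) * D + (Lf : ℝ) * D := add_le_add hdes' hf'
      _ = ((Ldes : ℝ) + Lf) * D := by ring
  -- projection difference
  have hP : ‖projBall m rx (πdes x - πf x) - projBall m ry (πdes y - πf y)‖
      ≤ S * D + ((Ldes : ℝ) + Lf) * D := by
    have hsplit : projBall m rx (πdes x - πf x) - projBall m ry (πdes y - πf y)
        = (projBall m rx (πdes x - πf x) - projBall m ry (πdes x - πf x))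
          + (projBall m ry (πdes x - πf x) - projBall m ry (πdes y - πf y)) := by abel
    rw [hsplit]
    refine (norm_add_le _ _).trans (add_le_add ?_ ?_)
    · exact (projBall_radius m rx ry _).trans hrdiff
    · exact (projBall_nonexp m ry hry0 _ _).trans hv
  -- assemble
  rw [dist_eq_norm]
  have hfinal : (πf x + projBall m rx (πdes x - πf x)) - (πf y + projBall m ry (πdes y - πf y))
      = (πf x - πf y) + (projBall m rx (πdes x - πf x) - projBall m ry (πdes y - πf y)) := by
    abel
  rw [hfinal]
  have hK : ((Ldes + 2 * Lf + ⨆ i, (Lb i + Lf + La i * U) : NNReal) : ℝ)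
      = (Ldes : ℝ) + 2 * Lf + S := by push_cast [hS]; ring
  rw [hK]
  calc ‖(πf x - πf y) + (projBall m rx (πdes x - πf x) - projBall m ry (πdes y - πf y))‖
      ≤ ‖πf x - πf y‖ + ‖projBall m rx (πdes x - πf x) - projBall m ry (πdes y - πf y)‖ :=
        norm_add_le _ _
    _ ≤ (Lf : ℝ) * D + (S * D + ((Ldes : ℝ) + Lf) * D) := add_le_add hf' hP
    _ = ((Ldes : ℝ) + 2 * Lf + S) * D := by ring
end

section
/- In Example 2 with π_f(x) = (2 + |x₂|, 0) and r(x) = min(1 + |x₂|, (1 − x₂ + |x₂|)/√(1 + x₁²)), the SOCP solution π_socp(x) = (2 + |x₂| − min(1 + |x₂|, (1 − x₂ + |x₂|)/√(1 + x₁²)), 0) is Lipschitz continuous on {x ∈ ℝ² : ‖x‖_∞ ≤ 2}. -/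
lemma sqrt_one_add_sq_lip (a b : ℝ) :
    |Real.sqrt (1 + a ^ 2) - Real.sqrt (1 + b ^ 2)| ≤ |a - b| := by
  have ha0 : (0:ℝ) ≤ 1 + a ^ 2 := by positivity
  have hb0 : (0:ℝ) ≤ 1 + b ^ 2 := by positivity
  have ha : Real.sqrt (1 + a ^ 2) ^ 2 = 1 + a ^ 2 := Real.sq_sqrt ha0
  have hb : Real.sqrt (1 + b ^ 2) ^ 2 = 1 + b ^ 2 := Real.sq_sqrt hb0
  have hcs : (1 + a * b) ^ 2 ≤ (1 + a ^ 2) * (1 + b ^ 2) := by nlinarith [sq_nonneg (a - b)]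
  have hmul : 1 + a * b ≤ Real.sqrt (1 + a ^ 2) * Real.sqrt (1 + b ^ 2) := by
    rw [← Real.sqrt_mul ha0]
    calc 1 + a * b ≤ |1 + a * b| := le_abs_self _
      _ = Real.sqrt ((1 + a * b) ^ 2) := (Real.sqrt_sq_eq_abs _).symm
      _ ≤ Real.sqrt ((1 + a ^ 2) * (1 + b ^ 2)) := Real.sqrt_le_sqrt hcs
  have key : (Real.sqrt (1 + a ^ 2) - Real.sqrt (1 + b ^ 2)) ^ 2 ≤ (a - b) ^ 2 := by
    nlinarith [ha, hb, hmul]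
  calc |Real.sqrt (1 + a ^ 2) - Real.sqrt (1 + b ^ 2)|
      = Real.sqrt ((Real.sqrt (1 + a ^ 2) - Real.sqrt (1 + b ^ 2)) ^ 2) :=
        (Real.sqrt_sq_eq_abs _).symm
    _ ≤ Real.sqrt ((a - b) ^ 2) := Real.sqrt_le_sqrt key
    _ = |a - b| := Real.sqrt_sq_eq_abs _

/-- the explicit SOCP solution of Example 2 is Lipschitz on the box
`{x : ‖x‖_∞ ≤ 2}`. -/
theorem example2_socp_lipschitz :
    ∃ L : NNReal, LipschitzOnWith L
      (fun x : ℝ × ℝ =>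
        ((2 + |x.2| - min (1 + |x.2|)
            ((1 - x.2 + |x.2|) / Real.sqrt (1 + x.1 ^ 2)), 0) : ℝ × ℝ))
      {x : ℝ × ℝ | |x.1| ≤ 2 ∧ |x.2| ≤ 2} := by
  refine ⟨10, (lipschitzOnWith_iff_dist_le_mul).2 ?_⟩
  intro x hx y hy
  obtain ⟨hx1, hx2⟩ := hx
  obtain ⟨hy1, hy2⟩ := hy
  set Dx := Real.sqrt (1 + x.1 ^ 2) with hDx_def
  set Dy := Real.sqrt (1 + y.1 ^ 2) with hDy_def
  set Nx := 1 - x.2 + |x.2| with hNx_def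
  set Ny := 1 - y.2 + |y.2| with hNy_def
  have hDx1 : (1:ℝ) ≤ Dx := by
    have h := Real.sqrt_le_sqrt (show (1:ℝ) ≤ 1 + x.1 ^ 2 by nlinarith [sq_nonneg x.1])
    rw [Real.sqrt_one] at h; exact h
  have hDy1 : (1:ℝ) ≤ Dy := by
    have h := Real.sqrt_le_sqrt (show (1:ℝ) ≤ 1 + y.1 ^ 2 by nlinarith [sq_nonneg y.1])
    rw [Real.sqrt_one] at h; exact h
  have hDx0 : (0:ℝ) < Dx := lt_of_lt_of_le one_pos hDx1
  have hDy0 : (0:ℝ) < Dy := lt_of_lt_of_le one_pos hDy1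
  have hDlip : |Dx - Dy| ≤ |x.1 - y.1| := sqrt_one_add_sq_lip x.1 y.1
  set M := max |x.1 - y.1| |x.2 - y.2| with hM_def
  have hM1 : |x.1 - y.1| ≤ M := le_max_left _ _
  have hM2 : |x.2 - y.2| ≤ M := le_max_right _ _
  have habs2 : |(|x.2| - |y.2|)| ≤ |x.2 - y.2| := abs_abs_sub_abs_le_abs_sub _ _
  -- bound on |Nx - Ny|
  have hN : |Nx - Ny| ≤ 2 * |x.2 - y.2| := by
    have he : Nx - Ny = (y.2 - x.2) + (|x.2| - |y.2|) := by rw [hNx_def, hNy_def]; ring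
    rw [he]
    calc |(y.2 - x.2) + (|x.2| - |y.2|)| ≤ |y.2 - x.2| + |(|x.2| - |y.2|)| := abs_add_le _ _
      _ ≤ |x.2 - y.2| + |x.2 - y.2| := by
          rw [abs_sub_comm y.2 x.2]; linarith
      _ = 2 * |x.2 - y.2| := by ring
  have hNy5 : |Ny| ≤ 5 := by
    rw [hNy_def, abs_le]
    constructor <;> nlinarith [abs_nonneg y.2, le_abs_self y.2, neg_abs_le y.2]
  -- bound on the quotient difference
  have hq : |Nx / Dx - Ny / Dy| ≤ 2 * |x.2 - y.2| + 5 * |x.1 - y.1| := by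
    have he : Nx / Dx - Ny / Dy = (Nx - Ny) / Dx + Ny * (Dy - Dx) / (Dx * Dy) := by
      field_simp
      ring
    rw [he]
    have h1 : |(Nx - Ny) / Dx| ≤ 2 * |x.2 - y.2| := by
      rw [abs_div, abs_of_pos hDx0]
      exact (div_le_self (abs_nonneg _) hDx1).trans hN
    have h2 : |Ny * (Dy - Dx) / (Dx * Dy)| ≤ 5 * |x.1 - y.1| := by
      rw [abs_div, abs_mul, abs_of_pos (mul_pos hDx0 hDy0)]
      have hDD : (1:ℝ) ≤ Dx * Dy := by nlinarith
      calc |Ny| * |Dy - Dx| / (Dx * Dy) ≤ |Ny| * |Dy - Dx| :=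
            div_le_self (by positivity) hDD
        _ ≤ 5 * |x.1 - y.1| := by
            have : |Dy - Dx| ≤ |x.1 - y.1| := by rw [abs_sub_comm]; exact hDlip
            exact mul_le_mul hNy5 this (abs_nonneg _) (by norm_num)
    calc |(Nx - Ny) / Dx + Ny * (Dy - Dx) / (Dx * Dy)|
        ≤ |(Nx - Ny) / Dx| + |Ny * (Dy - Dx) / (Dx * Dy)| := abs_add_le _ _
      _ ≤ 2 * |x.2 - y.2| + 5 * |x.1 - y.1| := add_le_add h1 h2
  have hM0 : (0:ℝ) ≤ M := le_trans (abs_nonneg _) hM2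
  -- min difference bound
  have hmin : |min (1 + |x.2|) (Nx / Dx) - min (1 + |y.2|) (Ny / Dy)| ≤ 7 * M := by
    refine (abs_min_sub_min_le_max _ _ _ _).trans (max_le ?_ ?_)
    · have : |1 + |x.2| - (1 + |y.2|)| = |(|x.2| - |y.2|)| := by ring_nf
      rw [this]
      linarith
    · linarith
  -- assemble
  rw [Prod.dist_eq]
  simp only [dist_self, Real.dist_eq]
  have hcast : ((10 : NNReal) : ℝ) = 10 := by norm_num
  rw [hcast]
  have hdxy : M ≤ dist x y := by
    rw [Prod.dist_eq, Real.dist_eq, Real.dist_eq]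
  have hmain : |2 + |x.2| - min (1 + |x.2|) (Nx / Dx) -
      (2 + |y.2| - min (1 + |y.2|) (Ny / Dy))| ≤ 8 * M := by
    have he : 2 + |x.2| - min (1 + |x.2|) (Nx / Dx) -
        (2 + |y.2| - min (1 + |y.2|) (Ny / Dy)) =
        (|x.2| - |y.2|) + (min (1 + |y.2|) (Ny / Dy) - min (1 + |x.2|) (Nx / Dx)) := by ring
    rw [he]
    calc |(|x.2| - |y.2|) + (min (1 + |y.2|) (Ny / Dy) - min (1 + |x.2|) (Nx / Dx))|
        ≤ |(|x.2| - |y.2|)| + |min (1 + |y.2|) (Ny / Dy) - min (1 + |x.2|) (Nx / Dx)| :=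
          abs_add_le _ _
      _ ≤ 8 * M := by
          rw [abs_sub_comm (min (1 + |y.2|) (Ny / Dy))]
          linarith
  have hmax : max |2 + |x.2| - min (1 + |x.2|) (Nx / Dx) -
      (2 + |y.2| - min (1 + |y.2|) (Ny / Dy))| 0 =
      |2 + |x.2| - min (1 + |x.2|) (Nx / Dx) - (2 + |y.2| - min (1 + |y.2|) (Ny / Dy))| :=
    max_eq_left (abs_nonneg _)
  rw [hmax]
  have hd0 : M ≤ dist x y := hdxy
  nlinarith [hmain, dist_nonneg (x := x) (y := y)]
end
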